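/- Let K be a compact subset of [0,1]^d. Then for any β' > β ≥ 0, there exists a finite simplicial complex (equivalently, a compact triangulable space) L with K^β ⊆ L ⊆ K^{β'}, and consequently the map on singular homology H_s(K^β) → H_s(K^{β'}) induced by inclusion has finite rank for every s. -/

import Mathlib

/-!
The simplices of Kuhn's triangulation of `ℝ^ι` with mesh `h` are the chains of grid points of
`hℤ^ι`, for the coordinatewise order, along which every coordinate rises by `0` or `h`. A point
`x` lies in the convex hull of its carrier, the vertices `h⌊x/h⌋ + h·𝟙[t ≤ fract (x/h)]` for
`0 < t ≤ 1` (a layer-cake decomposition of `fract (x/h)`), and the carrier is contained in every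
Kuhn simplex whose hull contains `x`. Hence the Kuhn simplices whose hulls lie in a set `A` form
a simplicial complex with `|L| ⊆ A`. It is finite when `A` is bounded, and `|L|` contains every
`x` whose closed `√d·h`-ball lies in `A`, because the carrier of `x` stays that close to `x`.
With `A = K^{β'}` and `√d·h ≤ β' - β` this sandwiches `|L|` between the two offsets, so the
inclusion `K^β → K^{β'}` factors through `|L|` and its image under `H` is finite-dimensional.
-/

open CategoryTheory Metric

namespace Finset

variable {α : Type*} [Preorder α] {s : Finset α}

lemma exists_isGreatest_of_isChain (hc : IsChain (· ≤ ·) (s : Set α)) (hs : s.Nonempty) :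
    ∃ g, IsGreatest (s : Set α) g :=
  let ⟨g, hg⟩ := s.exists_maximal hs
  ⟨g, hc.directedOn.maximal_iff_isGreatest.1 hg⟩

lemma exists_isLeast_of_isChain (hc : IsChain (· ≤ ·) (s : Set α)) (hs : s.Nonempty) :
    ∃ q, IsLeast (s : Set α) q :=
  let ⟨q, hq⟩ := s.exists_minimal hs
  ⟨q, (show IsChain (· ≥ ·) (s : Set α) from hc.symm).directedOn.minimal_iff_isLeast.1 hq⟩

end Finset

lemma EuclideanSpace.dist_le_sqrt_card_mul {ι : Type*} [Fintype ι] {x y : EuclideanSpace ℝ ι}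
    {r : ℝ} (hr : 0 ≤ r) (hxy : ∀ i, |x i - y i| ≤ r) :
    dist x y ≤ √(Fintype.card ι) * r := by
  rw [EuclideanSpace.dist_eq, ← Real.sqrt_sq hr, ← Real.sqrt_mul (Nat.cast_nonneg _)]
  gcongr
  calc ∑ i, dist (x i) (y i) ^ 2 ≤ ∑ _i : ι, r ^ 2 :=
        Finset.sum_le_sum fun i _ => by
          rw [Real.dist_eq]
          exact pow_le_pow_left₀ (abs_nonneg _) (hxy i) 2
    _ = Fintype.card ι * r ^ 2 := by simp

open Finset Pointwise

noncomputable section SuperlevelIndicator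

variable {ι : Type*}

def superlevelIndicator (f : EuclideanSpace ℝ ι) (t : ℝ) : EuclideanSpace ℝ ι :=
  WithLp.toLp 2 fun i => if t ≤ f i then 1 else 0

lemma superlevelIndicator_apply (f : EuclideanSpace ℝ ι) (t : ℝ) (i : ι) :
    superlevelIndicator f t i = if t ≤ f i then 1 else 0 :=
  rfl

lemma finite_range_superlevelIndicator [Finite ι] (f : EuclideanSpace ℝ ι) :
    (Set.range (superlevelIndicator f)).Finite :=
  (Set.finite_range fun S : Set ι => WithLp.toLp 2 (S.indicator 1)).subset <|
    Set.range_subset_iff.2 fun t =>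
      ⟨{i | t ≤ f i}, by ext i; simp [superlevelIndicator_apply, Set.indicator_apply]⟩

-- What remains of `f` after peeling off its lowest positive level `τ`, rescaled to `[0, 1)`.
def rescaleAbove (f : EuclideanSpace ℝ ι) (τ : ℝ) : EuclideanSpace ℝ ι :=
  WithLp.toLp 2 fun i => if 0 < f i then (f i - τ) / (1 - τ) else 0

variable {f : EuclideanSpace ℝ ι} {τ : ℝ}

lemma superlevelIndicator_rescaleAbove (hτ₀ : 0 ≤ τ) (hτ₁ : τ < 1) {t : ℝ} (ht : 0 < t) :
    superlevelIndicator (rescaleAbove f τ) t = superlevelIndicator f (τ + t * (1 - τ)) := by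
  have hiff : ∀ i, t ≤ rescaleAbove f τ i ↔ τ + t * (1 - τ) ≤ f i := fun i => by
    by_cases hfi : 0 < f i
    · simp only [rescaleAbove, PiLp.toLp_apply, if_pos hfi, le_div_iff₀ (sub_pos.2 hτ₁)]
      constructor <;> intro <;> linarith
    · simp only [rescaleAbove, PiLp.toLp_apply, if_neg hfi]
      constructor <;> intro <;> nlinarith
  ext i
  simp only [superlevelIndicator_apply, hiff]

lemma smul_superlevelIndicator_add_smul_rescaleAbove (hf₀ : ∀ i, 0 ≤ f i) (hτ₀ : 0 < τ)
    (hτ₁ : τ < 1) (hτf : ∀ i, 0 < f i → τ ≤ f i) :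
    τ • superlevelIndicator f τ + (1 - τ) • rescaleAbove f τ = f := by
  ext i
  simp only [superlevelIndicator_apply, rescaleAbove, PiLp.add_apply,
    PiLp.smul_apply, smul_eq_mul]
  by_cases hfi : 0 < f i
  · rw [if_pos (hτf i hfi), if_pos hfi]
    field_simp [(sub_pos.2 hτ₁).ne']
    ring
  · rw [(not_lt.1 hfi).antisymm (hf₀ i), if_neg (not_le.2 hτ₀), if_neg (lt_irrefl 0)]
    ring

lemma mem_convexHull_superlevelIndicator [Fintype ι] (f : EuclideanSpace ℝ ι)
    (hf₀ : ∀ i, 0 ≤ f i) (hf₁ : ∀ i, f i < 1) :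
    f ∈ convexHull ℝ (superlevelIndicator f '' Set.Ioc 0 1) := by
  classical
  induction hn : #{i | 0 < f i} using Nat.strong_induction_on generalizing f with
  | _ n ih =>
  by_cases hpos : ∃ i, 0 < f i
  swap
  · push Not at hpos
    refine subset_convexHull ℝ _ ⟨1, ⟨one_pos, le_rfl⟩, ?_⟩
    ext i
    simp [superlevelIndicator_apply, (hpos i).antisymm (hf₀ i), not_le.2 one_pos]
  obtain ⟨i₀, hi₀, hmin⟩ := exists_min_image {i | 0 < f i} f
    (let ⟨i, hi⟩ := hpos; ⟨i, by simpa using hi⟩)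
  set τ := f i₀
  have hτ₀ : 0 < τ := (mem_filter.1 hi₀).2
  have hτ₁ : τ < 1 := hf₁ i₀
  have hτf : ∀ i, 0 < f i → τ ≤ f i := fun i hi => hmin i (by simpa using hi)
  have hf' : rescaleAbove f τ ∈ convexHull ℝ (superlevelIndicator f '' Set.Ioc 0 1) := by
    refine convexHull_mono ?_ (ih _ ?_ _ (fun i => ?_) (fun i => ?_) rfl)
    · rintro _ ⟨t, ⟨ht₀, ht₁⟩, rfl⟩
      rw [superlevelIndicator_rescaleAbove hτ₀.le hτ₁ ht₀]
      exact ⟨_, ⟨by nlinarith, by nlinarith⟩, rfl⟩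
    · rw [← hn]
      refine card_lt_card ⟨fun i hi => ?_, fun hsub => ?_⟩
      · simp only [rescaleAbove, mem_filter, mem_univ, true_and, PiLp.toLp_apply] at hi ⊢
        by_contra hfi
        simp [hfi] at hi
      · simpa [rescaleAbove, hτ₀, τ] using hsub hi₀
    · by_cases hfi : 0 < f i
      · simpa [rescaleAbove, hfi] using
          div_nonneg (sub_nonneg.2 (hτf i hfi)) (sub_pos.2 hτ₁).le
      · simp [rescaleAbove, hfi]
    · by_cases hfi : 0 < f i
      · simpa [rescaleAbove, hfi] using (div_lt_one (sub_pos.2 hτ₁)).2 (by linarith [hf₁ i])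
      · simp [rescaleAbove, hfi]
  have hτmem : superlevelIndicator f τ ∈ superlevelIndicator f '' Set.Ioc 0 1 :=
    ⟨τ, ⟨hτ₀, hτ₁.le⟩, rfl⟩
  simpa only [smul_superlevelIndicator_add_smul_rescaleAbove hf₀ hτ₀ hτ₁ hτf] using
    (convex_convexHull ℝ _) (subset_convexHull ℝ _ hτmem) hf' hτ₀.le (sub_pos.2 hτ₁).le
      (by ring)

end SuperlevelIndicator

noncomputable section Kuhn

variable {ι : Type*}

local instance : PartialOrder (EuclideanSpace ℝ ι) :=
  PartialOrder.lift WithLp.ofLp (WithLp.ofLp_injective 2)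

structure IsKuhnSimplex (h : ℝ) (s : Finset (EuclideanSpace ℝ ι)) : Prop where
  mem_grid : ∀ x ∈ s, ∀ i, ∃ z : ℤ, x i = h * z
  isChain : IsChain (· ≤ ·) (s : Set (EuclideanSpace ℝ ι))
  step : ∀ x ∈ s, ∀ y ∈ s, x ≤ y → ∀ i, y i = x i ∨ y i = x i + h

namespace IsKuhnSimplex

variable {h : ℝ} {s t : Finset (EuclideanSpace ℝ ι)}

lemma mono (hs : IsKuhnSimplex h s) (hts : t ⊆ s) : IsKuhnSimplex h t where
  mem_grid x hx := hs.mem_grid x (hts hx)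
  isChain := hs.isChain.mono (coe_subset.2 hts)
  step x hx y hy := hs.step x (hts hx) y (hts hy)

open scoped Classical in
lemma exists_apply_add_eq_of_isGreatest (hs : IsKuhnSimplex h s) {g : EuclideanSpace ℝ ι}
    (hg : IsGreatest (s : Set (EuclideanSpace ℝ ι)) g) (hne : (s.erase g).Nonempty) :
    ∃ i, ∀ z ∈ s.erase g, z i + h = g i := by
  obtain ⟨p, hpmem, hp⟩ := exists_isGreatest_of_isChain (hs.mono (erase_subset g s)).isChain hne
  have hps : p ∈ s := mem_of_mem_erase hpmem
  obtain ⟨i, hi⟩ : ∃ i, p i < g i := by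
    by_contra! hle
    exact (ne_of_mem_erase hpmem) (le_antisymm (hg.2 hps) hle)
  refine ⟨i, fun z hz => ?_⟩
  have hzp : z i ≤ p i := hp hz i
  rcases hs.step z (mem_of_mem_erase hz) g hg.1 (hg.2 (mem_of_mem_erase hz)) i with hzg | hzg
  · linarith
  · exact hzg.symm

lemma eq_zero_of_sum_eq_zero (hh : 0 < h) (hs : IsKuhnSimplex h s)
    (w : EuclideanSpace ℝ ι → ℝ) (hw₀ : ∑ y ∈ s, w y = 0)
    (hw₁ : ∑ y ∈ s, w y • y = 0) :
    ∀ y ∈ s, w y = 0 := by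
  classical
  induction s using Finset.strongInduction with
  | H s ih =>
  rcases s.eq_empty_or_nonempty with rfl | hsne
  · simp
  obtain ⟨g, hg⟩ := exists_isGreatest_of_isChain hs.isChain hsne
  have hsplit := fun f : EuclideanSpace ℝ ι → ℝ => add_sum_erase s f hg.1
  -- The top vertex `g` alone is maximal in some coordinate `i`, so coordinate `i` of the
  -- relation `∑ w y • y = 0` isolates `w g`.
  have hwg : w g = 0 := by
    have hsplit₀ := hsplit w
    rw [hw₀] at hsplit₀
    rcases (s.erase g).eq_empty_or_nonempty with he | hne
    · simpa [he] using hsplit₀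
    obtain ⟨i, hi⟩ := hs.exists_apply_add_eq_of_isGreatest hg hne
    have hcoord : ∑ y ∈ s, w y * y i = 0 := by
      simpa using congrArg (fun v : EuclideanSpace ℝ ι => v i) hw₁
    have herase : ∑ y ∈ s.erase g, w y * y i = (g i - h) * ∑ y ∈ s.erase g, w y := by
      rw [mul_sum]
      exact sum_congr rfl fun z hz => by rw [← hi z hz]; ring
    have hsplit₁ := hsplit fun y => w y * y i
    rw [hcoord] at hsplit₁
    have : h * w g = 0 := by linear_combination hsplit₁ - herase - (g i - h) * hsplit₀
    exact (mul_eq_zero.1 this).resolve_left hh.ne'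
  have hrest := ih (s.erase g) (erase_ssubset hg.1) (hs.mono (erase_subset g s))
    (by rw [sum_erase s hwg, hw₀]) (by rw [sum_erase s (by simp [hwg]), hw₁])
  intro y hy
  by_cases hyg : y = g
  · exact hyg ▸ hwg
  · exact hrest y (mem_erase.2 ⟨hyg, hy⟩)

lemma apply_eq_or_of_isLeast (hs : IsKuhnSimplex h s) {q y : EuclideanSpace ℝ ι}
    (hq : IsLeast (s : Set (EuclideanSpace ℝ ι)) q) (hy : y ∈ s) (i : ι) :
    y i = q i ∨ y i = q i + h :=
  hs.step q hq.1 y hy (hq.2 hy) i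

lemma apply_eq_add_of_isLeast (hh : 0 < h) (hs : IsKuhnSimplex h s) {q y : EuclideanSpace ℝ ι}
    (hq : IsLeast (s : Set (EuclideanSpace ℝ ι)) q) (hy : y ∈ s) {i : ι}
    (hle : q i + h ≤ y i) :
    y i = q i + h :=
  (hs.apply_eq_or_of_isLeast hq hy i).resolve_left fun hyq => by linarith

open scoped Classical in
lemma sum_smul_apply (hs : IsKuhnSimplex h s) {q : EuclideanSpace ℝ ι}
    (hq : IsLeast (s : Set (EuclideanSpace ℝ ι)) q) {w : EuclideanSpace ℝ ι → ℝ}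
    (hw : ∑ y ∈ s, w y = 1) (i : ι) :
    (∑ y ∈ s, w y • y) i = q i + h * ∑ y ∈ s with y i = q i + h, w y := by
  have hcoord : ∀ y ∈ s, w y * y i = w y * q i + if y i = q i + h then w y * h else 0 := by
    intro y hy
    rcases hs.apply_eq_or_of_isLeast hq hy i with hyi | hyi
    · split_ifs with hc
      · rw [hyi, show h = 0 by linarith]
        ring
      · rw [hyi, add_zero]
    · rw [if_pos hyi, hyi]
      ring
  simp only [WithLp.ofLp_sum, PiLp.smul_apply, smul_eq_mul, Finset.sum_apply]
  rw [sum_congr rfl hcoord, sum_add_distrib, ← sum_mul, hw, sum_ite, sum_const_zero, add_zero,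
    ← sum_mul]
  ring

open scoped Classical in
lemma exists_mem_apply_eq (hh : 0 < h) (hs : IsKuhnSimplex h s) {q : EuclideanSpace ℝ ι}
    (hq : IsLeast (s : Set (EuclideanSpace ℝ ι)) q) {w : EuclideanSpace ℝ ι → ℝ}
    (hw₀ : ∀ y ∈ s, 0 ≤ w y) (hw₁ : ∑ y ∈ s, w y = 1) {t : ℝ}
    (ht : t ∈ Set.Ioc 0 1) :
    ∃ Y ∈ s, ∀ i, Y i = q i + if t ≤ ∑ y ∈ s with y i = q i + h, w y then h else 0 := by
  -- `Y` is the last vertex of the chain whose upper weight `Λ Y` is still at least `t`.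
  set Λ : EuclideanSpace ℝ ι → ℝ := fun y => ∑ z ∈ s with y ≤ z, w z
  have hmono : ∀ {S T : Finset (EuclideanSpace ℝ ι)}, S ⊆ T → T ⊆ s →
      ∑ z ∈ S, w z ≤ ∑ z ∈ T, w z := fun hST hT =>
    sum_le_sum_of_subset_of_nonneg hST fun z hz _ => hw₀ z (hT hz)
  have hqQ : q ∈ s.filter (t ≤ Λ ·) := by
    refine mem_filter.2 ⟨hq.1, ?_⟩
    show t ≤ ∑ z ∈ s with q ≤ z, w z
    rw [filter_true_of_mem fun z hz => hq.2 hz, hw₁]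
    exact ht.2
  obtain ⟨Y, hYQ, hYmax⟩ := exists_isGreatest_of_isChain
    (hs.mono (filter_subset _ s)).isChain ⟨q, hqQ⟩
  obtain ⟨hY, htY⟩ := mem_filter.1 hYQ
  refine ⟨Y, hY, fun i => ?_⟩
  split_ifs with hti
  · have hU : ({y ∈ s | y i = q i + h} : Finset _).Nonempty := by
      by_contra hU
      rw [not_nonempty_iff_eq_empty.1 hU, sum_empty] at hti
      linarith [ht.1]
    obtain ⟨m, hmU, hm⟩ := exists_isLeast_of_isChain (hs.mono (filter_subset _ s)).isChain hU
    have hmQ : m ∈ s.filter (t ≤ Λ ·) := by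
      refine mem_filter.2 ⟨(mem_filter.1 hmU).1,
        hti.trans (hmono (fun z hz => mem_filter.2 ⟨(mem_filter.1 hz).1, hm hz⟩)
          (filter_subset _ s))⟩
    refine hs.apply_eq_add_of_isLeast hh hq hY ?_
    rw [← (mem_filter.1 hmU).2]
    exact hYmax hmQ i
  · refine ((hs.apply_eq_or_of_isLeast hq hY i).resolve_right fun hYi => hti ?_).trans
      (add_zero _).symm
    refine htY.trans (hmono (fun z hz => ?_) (filter_subset _ s))
    obtain ⟨hz, hYz⟩ := mem_filter.1 hz
    exact mem_filter.2 ⟨hz, hs.apply_eq_add_of_isLeast hh hq hz (hYi ▸ hYz i)⟩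

lemma affineIndependent (hh : 0 < h) (hs : IsKuhnSimplex h s) :
    AffineIndependent ℝ ((↑) : s → EuclideanSpace ℝ ι) := by
  classical
  rw [affineIndependent_iff]
  intro t w hw₀ hw₁ y hy
  set W : EuclideanSpace ℝ ι → ℝ := fun x => if hx : x ∈ s then w ⟨x, hx⟩ else 0
  have hWt : IsKuhnSimplex h (t.map (Function.Embedding.subtype _)) :=
    hs.mono fun x hx => by obtain ⟨x, -, rfl⟩ := mem_map.1 hx; exact x.2
  simpa [W] using hWt.eq_zero_of_sum_eq_zero hh W (by simpa [W] using hw₀)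
    (by simpa [W] using hw₁) y (mem_map_of_mem _ hy)

end IsKuhnSimplex

def gridFloor (h : ℝ) (x : EuclideanSpace ℝ ι) : EuclideanSpace ℝ ι :=
  WithLp.toLp 2 fun i => h * ⌊x i / h⌋

def gridFract (h : ℝ) (x : EuclideanSpace ℝ ι) : EuclideanSpace ℝ ι :=
  WithLp.toLp 2 fun i => Int.fract (x i / h)

def kuhnVertex (h : ℝ) (x : EuclideanSpace ℝ ι) (t : ℝ) : EuclideanSpace ℝ ι :=
  gridFloor h x + h • superlevelIndicator (gridFract h x) t

def kuhnCarrier (h : ℝ) (x : EuclideanSpace ℝ ι) : Set (EuclideanSpace ℝ ι) :=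
  kuhnVertex h x '' Set.Ioc 0 1

variable {h : ℝ} {x : EuclideanSpace ℝ ι}

lemma kuhnVertex_apply (t : ℝ) (i : ι) :
    kuhnVertex h x t i = h * ⌊x i / h⌋ + if t ≤ Int.fract (x i / h) then h else 0 := by
  simp [kuhnVertex, gridFloor, gridFract, superlevelIndicator_apply]

lemma kuhnVertex_apply_eq_or (t : ℝ) (i : ι) :
    kuhnVertex h x t i = h * ⌊x i / h⌋ ∨ kuhnVertex h x t i = h * ⌊x i / h⌋ + h := by
  rw [kuhnVertex_apply]
  split_ifs <;> simp

lemma antitone_kuhnVertex (hh : 0 ≤ h) : Antitone (kuhnVertex h x) := fun t t' htt' i => by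
  simp only [kuhnVertex_apply]
  gcongr
  split_ifs with h₁ h₂ <;> first | exact le_rfl | exact hh | exact absurd (htt'.trans h₁) h₂

lemma finite_kuhnCarrier [Finite ι] : (kuhnCarrier h x).Finite :=
  ((finite_range_superlevelIndicator (gridFract h x)).image (gridFloor h x + h • ·)).subset <| by
    rintro _ ⟨t, -, rfl⟩
    exact ⟨_, ⟨t, rfl⟩, rfl⟩

lemma isKuhnSimplex_kuhnCarrier [Finite ι] (hh : 0 < h) :
    IsKuhnSimplex h (finite_kuhnCarrier (h := h) (x := x)).toFinset where
  mem_grid v hv i := by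
    obtain ⟨t, -, rfl⟩ := finite_kuhnCarrier.mem_toFinset.1 hv
    rcases kuhnVertex_apply_eq_or (h := h) (x := x) t i with hv | hv <;> rw [hv]
    · exact ⟨⌊x i / h⌋, rfl⟩
    · exact ⟨⌊x i / h⌋ + 1, by push_cast; ring⟩
  isChain := by
    rw [Set.Finite.coe_toFinset]
    exact (antitone_kuhnVertex hh.le).isChain_image (isChain_of_trichotomous _)
  step v hv w hw hvw i := by
    obtain ⟨t, -, rfl⟩ := finite_kuhnCarrier.mem_toFinset.1 hv
    obtain ⟨t', -, rfl⟩ := finite_kuhnCarrier.mem_toFinset.1 hw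
    have hle := hvw i
    rcases kuhnVertex_apply_eq_or (h := h) (x := x) t i with hv | hv <;>
    rcases kuhnVertex_apply_eq_or (h := h) (x := x) t' i with hw | hw <;>
    rw [hv, hw] at hle ⊢ <;> first | (left; rfl) | (right; rfl) | (exfalso; linarith)

lemma gridFloor_add_smul_gridFract (hh : h ≠ 0) (x : EuclideanSpace ℝ ι) :
    gridFloor h x + h • gridFract h x = x := by
  ext i
  simp only [gridFloor, gridFract, Int.fract, PiLp.add_apply, PiLp.smul_apply, smul_eq_mul]
  field_simp
  ring

lemma mem_convexHull_kuhnCarrier [Fintype ι] (hh : h ≠ 0) (x : EuclideanSpace ℝ ι) :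
    x ∈ convexHull ℝ (kuhnCarrier h x) := by
  have hcarrier : kuhnCarrier h x =
      gridFloor h x +ᵥ h • (superlevelIndicator (gridFract h x) '' Set.Ioc 0 1) := by
    rw [← Set.image_smul, ← Set.image_vadd, Set.image_image, Set.image_image]
    rfl
  have hx := Set.vadd_mem_vadd_set (a := gridFloor h x) <| Set.smul_mem_smul_set (a := h) <|
    mem_convexHull_superlevelIndicator (gridFract h x)
      (fun i => Int.fract_nonneg (x i / h)) (fun i => Int.fract_lt_one (x i / h))
  rwa [vadd_eq_add, gridFloor_add_smul_gridFract hh, ← convexHull_smul, ← convexHull_vadd,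
    ← hcarrier] at hx

lemma kuhnVertex_apply_of_eq (hh : 0 < h) {i : ι} {z : ℤ} {g : ℝ} (hx : x i = h * z + h * g)
    (hg : g ∈ Set.Icc 0 1) {t : ℝ} (ht : t ∈ Set.Ioc 0 1) :
    kuhnVertex h x t i = h * z + if t ≤ g then h else 0 := by
  have hdiv : x i / h = z + g := by
    rw [hx]
    field_simp
  rw [kuhnVertex_apply, hdiv]
  rcases hg.2.lt_or_eq with hg₁ | rfl
  · rw [Int.floor_intCast_add, Int.floor_eq_zero_iff.2 ⟨hg.1, hg₁⟩, Int.fract_intCast_add,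
      Int.fract_eq_self.2 ⟨hg.1, hg₁⟩]
    simp
  -- At `g = 1` the floor jumps by one and the fractional part drops to `0`.
  · rw [show (z : ℝ) + 1 = ((z + 1 : ℤ) : ℝ) by push_cast; ring, Int.floor_intCast,
      Int.fract_intCast, if_neg (not_le.2 ht.1), if_pos ht.2]
    push_cast
    ring

lemma IsKuhnSimplex.kuhnCarrier_subset (hh : 0 < h) {s : Finset (EuclideanSpace ℝ ι)}
    (hs : IsKuhnSimplex h s) (hx : x ∈ convexHull ℝ (s : Set (EuclideanSpace ℝ ι))) :
    kuhnCarrier h x ⊆ s := by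
  classical
  obtain ⟨w, hw₀, hw₁, rfl⟩ := Finset.mem_convexHull'.1 hx
  obtain ⟨q, hq⟩ := exists_isLeast_of_isChain hs.isChain
    (nonempty_of_sum_ne_zero (f := w) (by rw [hw₁]; exact one_ne_zero))
  rintro _ ⟨t, ht, rfl⟩
  obtain ⟨Y, hY, hYq⟩ := hs.exists_mem_apply_eq hh hq hw₀ hw₁ ht
  suffices kuhnVertex h (∑ y ∈ s, w y • y) t = Y from this ▸ hY
  ext i
  obtain ⟨z, hz⟩ := hs.mem_grid q hq.1 i
  have hg : ∑ y ∈ s with y i = q i + h, w y ∈ Set.Icc 0 1 :=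
    ⟨sum_nonneg fun y hy => hw₀ y (mem_filter.1 hy).1,
      hw₁ ▸ sum_le_sum_of_subset_of_nonneg (filter_subset _ s) fun y hy _ => hw₀ y hy⟩
  rw [hYq, kuhnVertex_apply_of_eq hh (by rw [hs.sum_smul_apply hq hw₁, hz]) hg ht, hz]


lemma abs_kuhnVertex_apply_sub_le (hh : 0 < h) (t : ℝ) (i : ι) :
    |kuhnVertex h x t i - x i| ≤ h := by
  have hx : x i = h * ⌊x i / h⌋ + h * Int.fract (x i / h) := by
    rw [← mul_add, Int.floor_add_fract]
    field_simp
  have hfract₀ : 0 ≤ h * Int.fract (x i / h) := mul_nonneg hh.le (Int.fract_nonneg _)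
  have hfract₁ : h * Int.fract (x i / h) < h :=
    mul_lt_of_lt_one_right hh (Int.fract_lt_one _)
  rw [kuhnVertex_apply, abs_le]
  split_ifs <;> constructor <;> linarith

lemma convexHull_kuhnCarrier_subset_closedBall [Fintype ι] (hh : 0 < h)
    (x : EuclideanSpace ℝ ι) :
    convexHull ℝ (kuhnCarrier h x) ⊆ closedBall x (√(Fintype.card ι) * h) :=
  convexHull_min (by
    rintro _ ⟨t, -, rfl⟩
    exact EuclideanSpace.dist_le_sqrt_card_mul hh.le (abs_kuhnVertex_apply_sub_le hh t))
    (convex_closedBall _ _)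

variable [Fintype ι]

def kuhnComplex (h : ℝ) (hh : 0 < h) (A : Set (EuclideanSpace ℝ ι)) :
    Geometry.SimplicialComplex ℝ (EuclideanSpace ℝ ι) where
  faces := {s | s.Nonempty ∧ IsKuhnSimplex h s ∧ convexHull ℝ ↑s ⊆ A}
  isRelLowerSet_faces := by
    rintro s ⟨hne, hs, hsA⟩
    exact ⟨hne, fun t hts htne =>
      ⟨htne, hs.mono hts, (convexHull_mono (coe_subset.2 hts)).trans hsA⟩⟩
  indep hs := hs.2.1.affineIndependent hh
  inter_subset_convexHull hs ht x hx :=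
    convexHull_mono (Set.subset_inter (hs.2.1.kuhnCarrier_subset hh hx.1)
      (ht.2.1.kuhnCarrier_subset hh hx.2)) (mem_convexHull_kuhnCarrier hh.ne' x)

variable {A : Set (EuclideanSpace ℝ ι)}

lemma kuhnComplex_space_subset (hh : 0 < h) : (kuhnComplex h hh A).space ⊆ A :=
  Set.iUnion₂_subset fun _ hs => hs.2.2

lemma mem_kuhnComplex_space (hh : 0 < h) (hx : convexHull ℝ (kuhnCarrier h x) ⊆ A) :
    x ∈ (kuhnComplex h hh A).space := by
  refine Geometry.SimplicialComplex.mem_space_iff.2 ⟨finite_kuhnCarrier.toFinset, ⟨?_,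
    isKuhnSimplex_kuhnCarrier hh, by rwa [Set.Finite.coe_toFinset]⟩, by
      rw [Set.Finite.coe_toFinset]; exact mem_convexHull_kuhnCarrier hh.ne' x⟩
  exact ⟨kuhnVertex h x 1,
    finite_kuhnCarrier.mem_toFinset.2 ⟨1, ⟨one_pos, le_rfl⟩, rfl⟩⟩

lemma finite_setOf_mem_grid (hh : 0 < h) (hA : Bornology.IsBounded A) :
    {v ∈ A | ∀ i, ∃ z : ℤ, v i = h * z}.Finite := by
  obtain ⟨R, hR⟩ := hA.subset_closedBall 0
  set N := ⌈R / h⌉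
  refine ((Set.Finite.pi fun _ : ι => Set.finite_Icc (-N) N).image
    fun z => (WithLp.toLp 2 fun i => h * z i : EuclideanSpace ℝ ι)).subset ?_
  rintro v ⟨hvA, hv⟩
  choose z hz using hv
  refine ⟨z, fun i _ => ?_, by ext i; simp [hz]⟩
  have hzR : |h * z i| ≤ R := by
    simpa [hz i] using (PiLp.norm_apply_le v i).trans (mem_closedBall_zero_iff.1 (hR hvA))
  rw [abs_mul, abs_of_pos hh, ← le_div_iff₀' hh, abs_le] at hzR
  have hN : R / h ≤ N := Int.le_ceil _
  have hzN : (z i : ℝ) ≤ N := hzR.2.trans hN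
  have hNz : ((-N : ℤ) : ℝ) ≤ z i := by push_cast; linarith [hzR.1]
  exact ⟨by exact_mod_cast hNz, by exact_mod_cast hzN⟩

lemma finite_faces_kuhnComplex (hh : 0 < h) (hA : Bornology.IsBounded A) :
    (kuhnComplex h hh A).faces.Finite := by
  refine ((finite_setOf_mem_grid hh hA).finite_subsets.preimage coe_injective.injOn).subset ?_
  rintro s ⟨-, hs, hsA⟩ y hy
  exact ⟨hsA (subset_convexHull ℝ _ hy), hs.mem_grid y hy⟩

theorem exists_simplicialComplex_faces_finite_subset_space_subset (hA : Bornology.IsBounded A)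
    {B : Set (EuclideanSpace ℝ ι)} {δ : ℝ} (hδ : 0 < δ)
    (hB : ∀ x ∈ B, closedBall x δ ⊆ A) :
    ∃ L : Geometry.SimplicialComplex ℝ (EuclideanSpace ℝ ι),
      L.faces.Finite ∧ B ⊆ L.space ∧ L.space ⊆ A := by
  set h := δ / (√(Fintype.card ι) + 1)
  have hh : 0 < h := by positivity
  have hhδ : √(Fintype.card ι) * h ≤ δ := by
    rw [mul_div_assoc', div_le_iff₀ (by positivity)]
    nlinarith
  refine ⟨kuhnComplex h hh A, finite_faces_kuhnComplex hh hA,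
    fun x hx => mem_kuhnComplex_space hh ?_, kuhnComplex_space_subset hh⟩
  exact (convexHull_kuhnCarrier_subset_closedBall hh x).trans
    ((closedBall_subset_closedBall hhδ).trans (hB x hx))

end Kuhn

lemma Bornology.IsBounded.setOf_infDist_le {X : Type*} [PseudoMetricSpace X] {K : Set X}
    (hK : IsBounded K) (hne : K.Nonempty) (r : ℝ) : IsBounded {x | infDist x K ≤ r} :=
  (hK.thickening (δ := r + 1)).subset fun x (hx : infDist x K ≤ r) =>
    (mem_thickening_iff_infDist_lt hne).2 (by linarith)

lemma closedBall_subset_setOf_infDist_le {X : Type*} [PseudoMetricSpace X] {K : Set X} {x : X}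
    {r r' : ℝ} (hx : infDist x K ≤ r) : closedBall x (r' - r) ⊆ {y | infDist y K ≤ r'} :=
  fun y hy => show infDist y K ≤ r' by
    linarith [infDist_le_infDist_add_dist (x := y) (y := x) (s := K), mem_closedBall.1 hy]

lemma CategoryTheory.Functor.finiteDimensional_range_map_comp {C : Type*} [Category C]
    {𝕂 : Type*} [Field 𝕂] (H : C ⥤ ModuleCat 𝕂) {X Y Z : C} (f : X ⟶ Y) (g : Y ⟶ Z)
    [FiniteDimensional 𝕂 (H.obj Y)] :
    FiniteDimensional 𝕂 (LinearMap.range (H.map (f ≫ g)).hom) := by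
  rw [H.map_comp, ModuleCat.hom_comp]
  exact Submodule.finiteDimensional_of_le (LinearMap.range_comp_le_range _ _)

theorem offset_homology_map_finite_rank_general
    (d : ℕ) (K : Set (EuclideanSpace ℝ (Fin d)))
    (hKc : IsCompact K) (hKne : K.Nonempty)
    (β β' : ℝ) (hββ' : β < β') :
    (∃ L : Geometry.SimplicialComplex ℝ (EuclideanSpace ℝ (Fin d)),
        L.faces.Finite ∧
        {x | infDist x K ≤ β} ⊆ L.space ∧ L.space ⊆ {x | infDist x K ≤ β'}) ∧
    ∀ (𝕂 : Type) (_ : Field 𝕂) (H : TopCat ⥤ ModuleCat 𝕂),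
      (∀ L : Geometry.SimplicialComplex ℝ (EuclideanSpace ℝ (Fin d)), L.faces.Finite →
        FiniteDimensional 𝕂 (H.obj (TopCat.of L.space))) →
      ∀ (incl : TopCat.of {x | infDist x K ≤ β} ⟶ TopCat.of {x | infDist x K ≤ β'}),
        incl = TopCat.ofHom ⟨Set.inclusion (fun x hx => le_of_lt (lt_of_le_of_lt hx hββ')),
                continuous_inclusion _⟩ →
        FiniteDimensional 𝕂 (LinearMap.range (H.map incl).hom) := by
  obtain ⟨L, hLfin, hβL, hLβ'⟩ := exists_simplicialComplex_faces_finite_subset_space_subset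
    (hKc.isBounded.setOf_infDist_le hKne β') (sub_pos.2 hββ')
    fun _ hx => closedBall_subset_setOf_infDist_le hx
  refine ⟨⟨L, hLfin, hβL, hLβ'⟩, fun 𝕂 _ H hH incl hincl => ?_⟩
  have : FiniteDimensional 𝕂 (H.obj (TopCat.of L.space)) := hH L hLfin
  subst hincl
  exact H.finiteDimensional_range_map_comp
    (TopCat.ofHom ⟨Set.inclusion hβL, continuous_inclusion hβL⟩)
    (TopCat.ofHom ⟨Set.inclusion hLβ', continuous_inclusion hLβ'⟩)

/-- For a compact `K ⊆ [0,1]^d` and `0 ≤ β < β'`, there is a finite simplicial complex `L`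
squeezed between the offsets `K^β ⊆ |L| ⊆ K^{β'}`; consequently the inclusion-induced map
on singular homology `H_s(K^β) → H_s(K^{β'})` has finite rank (formalized for any functor
`H` to vector spaces taking finite simplicial complexes to finite-dimensional spaces). -/
theorem offset_homology_map_finite_rank
    (d : ℕ) (K : Set (EuclideanSpace ℝ (Fin d)))
    (hKc : IsCompact K) (hKne : K.Nonempty)
    (hKcube : K ⊆ {x | ∀ i, x i ∈ Set.Icc (0 : ℝ) 1})
    (β β' : ℝ) (hβ : 0 ≤ β) (hββ' : β < β') :
    (∃ L : Geometry.SimplicialComplex ℝ (EuclideanSpace ℝ (Fin d)),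
        L.faces.Finite ∧
        {x | infDist x K ≤ β} ⊆ L.space ∧ L.space ⊆ {x | infDist x K ≤ β'}) ∧
    ∀ (𝕂 : Type) (_ : Field 𝕂) (H : TopCat ⥤ ModuleCat 𝕂),
      (∀ L : Geometry.SimplicialComplex ℝ (EuclideanSpace ℝ (Fin d)), L.faces.Finite →
        FiniteDimensional 𝕂 (H.obj (TopCat.of L.space))) →
      ∀ (incl : TopCat.of {x | infDist x K ≤ β} ⟶ TopCat.of {x | infDist x K ≤ β'}),
        incl = TopCat.ofHom ⟨Set.inclusion (fun x hx => le_of_lt (lt_of_le_of_lt hx hββ')),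
                continuous_inclusion _⟩ →
        FiniteDimensional 𝕂 (LinearMap.range (H.map incl).hom) :=
  offset_homology_map_finite_rank_general d K hKc hKne β β' hββ'
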